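/- In an additive category, let E : X → X be a morphism and suppose the countable coproduct X^(ℕ) of copies of X exists. Define Φ : X^(ℕ) → X^(ℕ) whose j-th component is the composite of [1−E, E]ᵗ : X → X ⊕ X, landing in the j-th and (j+1)-st summands, with the canonical inclusion; define Ψ : X^(ℕ) → X^(ℕ) whose 0-th component is (1−E) into the 0-th summand and whose j-th component (j ≥ 1 input) is [E, 1−E]ᵗ into the j-th and (j+1)-st summands. If E is idempotent (E² = E), then Ψ ∘ Φ = identity of X^(ℕ), i.e., Φ admits Ψ as a retraction. -/
import Mathlib


open CategoryTheory CategoryTheory.Limits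

/-- In an additive category admitting the countable coproduct `X^(ℕ)`, for an idempotent
`E : X ⟶ X`, the morphism `Φ` with components `[1−E, E]ᵗ : X ⟶ X ⊞ X` into the `j`-th and
`(j+1)`-st summands admits as retraction the morphism `Ψ` whose component out of the `0`-th
summand is `1−E` into the `0`-th summand, and whose component out of the `(k+1)`-st summand
is `[E, 1−E]ᵗ` into the `k`-th and `(k+1)`-st summands: `Ψ ∘ Φ = 𝟙`. -/
theorem idempotent_swindle_retraction {C : Type u} [Category.{v} C] [Preadditive C]
    (X : C) [HasCoproduct (fun _ : ℕ => X)] (E : X ⟶ X) (hE : E ≫ E = E) :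
    (Sigma.desc (fun j : ℕ =>
        (𝟙 X - E) ≫ Sigma.ι (fun _ : ℕ => X) j + E ≫ Sigma.ι (fun _ : ℕ => X) (j + 1))) ≫
    (Sigma.desc (fun j : ℕ =>
        match j with
        | 0 => (𝟙 X - E) ≫ Sigma.ι (fun _ : ℕ => X) 0
        | (k + 1) => E ≫ Sigma.ι (fun _ : ℕ => X) k +
            (𝟙 X - E) ≫ Sigma.ι (fun _ : ℕ => X) (k + 1))) =
      𝟙 (∐ (fun _ : ℕ => X)) := by
  have h0 : E ≫ (𝟙 X - E) = 0 := by simp [Preadditive.comp_sub, hE]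
  have h1 : (𝟙 X - E) ≫ E = 0 := by simp [Preadditive.sub_comp, hE]
  have h2 : (𝟙 X - E) ≫ (𝟙 X - E) = 𝟙 X - E := by
    simp [Preadditive.sub_comp, Preadditive.comp_sub, hE]
  ext j
  cases j with
  | zero =>
    simp only [colimit.ι_desc_assoc, Cofan.mk_ι_app, Preadditive.add_comp, Category.assoc,
      colimit.ι_desc, Category.comp_id, Preadditive.comp_add]
    rw [← Category.assoc, ← Category.assoc, ← Category.assoc, h2, hE, h0, zero_comp,
      add_zero, ← Preadditive.add_comp, sub_add_cancel]
    simp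
  | succ k =>
    simp only [colimit.ι_desc_assoc, Cofan.mk_ι_app, Preadditive.add_comp, Category.assoc,
      colimit.ι_desc, Category.comp_id, Preadditive.comp_add]
    rw [← Category.assoc, ← Category.assoc, ← Category.assoc, ← Category.assoc,
      h1, h2, hE, h0, zero_comp, zero_comp, add_zero, zero_add,
      ← Preadditive.add_comp, sub_add_cancel]
    simp
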